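/- Let w_1, …, w_N : ℝ^n → ℝ^n be contractions with respect to the metric d, with fixed points x_f^{(1)}, …, x_f^{(N)} and contraction factors λ_1, …, λ_N ∈ [0, 1), and let w̃_1, …, w̃_N be their δ-roundoffs. Let o ∈ ℝ^n, and set r_max = max_i d(x_f^{(i)}, o), λ_max = max_i λ_i, α = (1 + λ_max)/(1 − λ_max), and r = α·r_max + θ(1 − λ_max)^{−1}. Then for every ε > 0, the set S = B(o, r + ε) ∩ D^n(δ), where B(o, r + ε) is the open d-ball of radius r + ε centered at o, satisfies w̃_i(S) ⊂ S for every i ∈ {1, …, N}; moreover, the minimal absorbing set M[w̃_i] is contained in S for every i. -/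

import Mathlib

open Set

noncomputable section

/-- The δ-discretization of ℝⁿ: the set of centers of the cubes of the δ-grid. -/
def Dgrid (n : ℕ) (δ : ℝ) : Set (Fin n → ℝ) :=
  {x | ∃ m : Fin n → ℤ, x = fun j => δ * (m j : ℝ)}

/-- The δ-roundoff of a point `x ∈ ℝⁿ`. -/
def roundPt (n : ℕ) (δ : ℝ) (x : Fin n → ℝ) : Fin n → ℝ :=
  fun j => δ * (⌊x j / δ + 1 / 2⌋ : ℤ)

/-- The δ-roundoff of a mapping `w : ℝⁿ → ℝⁿ`. -/
def roundMap (n : ℕ) (δ : ℝ) (w : (Fin n → ℝ) → (Fin n → ℝ)) :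
    (Fin n → ℝ) → (Fin n → ℝ) :=
  fun x => roundPt n δ (w x)

/-- `Λ` is an absorbing set for `w` in `C`. -/
def IsAbsorbing {X : Type*} (w : X → X) (C Λ : Set X) : Prop :=
  Λ ⊆ C ∧ ∀ x ∈ C, ∃ N : ℕ, ∀ i ≥ N, w^[i] x ∈ Λ

/-- The intersection of all absorbing sets for `w` in `C`; it is called the
minimal absorbing set `M[w, C]` when it is itself absorbing in `C`. -/
def minAbsorbing {X : Type*} (w : X → X) (C : Set X) : Set X :=
  ⋂₀ {Λ | IsAbsorbing w C Λ}

/-- The diameter of a δ-cube with respect to the norm `nrm`; `θ` is half this value. -/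
def cubeDiam (n : ℕ) (δ : ℝ) (nrm : (Fin n → ℝ) → ℝ) : ℝ :=
  sSup {r | ∃ x y : Fin n → ℝ,
    (∀ j, -(δ / 2) ≤ x j ∧ x j < δ / 2) ∧
    (∀ j, -(δ / 2) ≤ y j ∧ y j < δ / 2) ∧ r = nrm (x - y)}

/-!
With `V y = d(y, o)`, the contraction property and the triangle inequality through the fixed
point give `V (w x) ≤ λ V x + (1 + λ) r_max`, and roundoff adds at most `θ`; hence
`V (w̃ x) - r ≤ λ_max (V x - r)` for the `r` of the statement. So the sublevel set
`{V < r + ε}` of the grid is mapped into itself, and every orbit of `w̃` enters it after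
finitely many steps (since `λ_max ^ k → 0`). It is therefore an absorbing set and contains
the minimal one.
-/

open Filter Topology

section Absorbing

variable {X : Type*} {f : X → X} {C Λ : Set X}

theorem minAbsorbing_subset (h : IsAbsorbing f C Λ) : minAbsorbing f C ⊆ Λ :=
  sInter_subset_of_mem h

variable {V : X → ℝ} {c r ε : ℝ}

theorem mapsTo_sublevel_of_contracting (hf : MapsTo f C C) (hc₀ : 0 ≤ c) (hc₁ : c ≤ 1)
    (hV : ∀ x, V (f x) - r ≤ c * (V x - r)) (hε : 0 < ε) :
    MapsTo f {y ∈ C | V y < r + ε} {y ∈ C | V y < r + ε} := by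
  rintro x ⟨hxC, hxV⟩
  refine ⟨hf hxC, ?_⟩
  have := hV x
  rcases le_total (V x - r) 0 with h | h <;> nlinarith

theorem sub_le_pow_mul_of_contracting (hc₀ : 0 ≤ c) (hV : ∀ x, V (f x) - r ≤ c * (V x - r))
    (x : X) (k : ℕ) : V (f^[k] x) - r ≤ c ^ k * (V x - r) := by
  induction k with
  | zero => simp
  | succ k ih =>
    rw [Function.iterate_succ_apply', pow_succ', mul_assoc]
    exact (hV _).trans (mul_le_mul_of_nonneg_left ih hc₀)

theorem isAbsorbing_sublevel_of_contracting (hf : MapsTo f C C) (hc₀ : 0 ≤ c) (hc₁ : c < 1)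
    (hV : ∀ x, V (f x) - r ≤ c * (V x - r)) (hε : 0 < ε) :
    IsAbsorbing f C {y ∈ C | V y < r + ε} := by
  refine ⟨fun y hy => hy.1, fun x hx => ?_⟩
  have hlim : Tendsto (fun k : ℕ => c ^ k * (V x - r)) atTop (𝓝 0) := by
    simpa using (tendsto_pow_atTop_nhds_zero_of_lt_one hc₀ hc₁).mul_const (V x - r)
  obtain ⟨N, hN⟩ := eventually_atTop.1 (hlim.eventually (gt_mem_nhds hε))
  refine ⟨N, fun k hk => ⟨hf.iterate k hx, ?_⟩⟩
  linarith [sub_le_pow_mul_of_contracting hc₀ hV x k, hN k hk]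

end Absorbing

section Seminorm

variable {E : Type*} [AddCommGroup E] [Module ℝ E] (p : Seminorm ℝ E)

theorem Seminorm.sub_le_of_contracting {w : E → E} {c : ℝ} (hc₀ : 0 ≤ c)
    (hw : ∀ x y, p (w x - w y) ≤ c * p (x - y)) {xf : E} (hxf : w xf = xf) (x o : E) :
    p (w x - o) ≤ c * p (x - o) + (1 + c) * p (xf - o) := by
  have hc := hw x xf
  rw [hxf] at hc
  calc p (w x - o) ≤ p (w x - xf) + p (xf - o) := le_map_sub_add_map_sub p _ _ _
    _ ≤ c * (p (x - o) + p (o - xf)) + p (xf - o) := by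
        gcongr
        exact hc.trans (mul_le_mul_of_nonneg_left (le_map_sub_add_map_sub p _ _ _) hc₀)
    _ = c * p (x - o) + (1 + c) * p (xf - o) := by rw [map_sub_rev p o]; ring

end Seminorm

section Grid

variable {n : ℕ} {δ : ℝ}

theorem roundPt_mem_Dgrid (x : Fin n → ℝ) : roundPt n δ x ∈ Dgrid n δ :=
  ⟨fun j => ⌊x j / δ + 1 / 2⌋, rfl⟩

theorem mapsTo_roundMap_Dgrid (w : (Fin n → ℝ) → (Fin n → ℝ)) :
    MapsTo (roundMap n δ w) (Dgrid n δ) (Dgrid n δ) :=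
  fun x _ => roundPt_mem_Dgrid (w x)

theorem abs_roundPt_sub_le (hδ : 0 < δ) (x : Fin n → ℝ) (j : Fin n) :
    |(roundPt n δ x - x) j| ≤ δ / 2 := by
  have h₁ := Int.floor_le (x j / δ + 1 / 2)
  have h₂ := Int.lt_floor_add_one (x j / δ + 1 / 2)
  have hx : x j = δ * (x j / δ) := by field_simp
  simp only [Pi.sub_apply, roundPt, abs_le]
  constructor <;> nlinarith

variable (p : Seminorm ℝ (Fin n → ℝ))

theorem Seminorm.le_sum_abs_mul (v : Fin n → ℝ) :
    p v ≤ ∑ j, |v j| * p (Pi.single j 1) := by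
  calc p v = p (∑ j, v j • Pi.single j 1) := by
        congr 1; ext i; simp [Finset.sum_apply, Pi.single_apply]
    _ ≤ ∑ j, p (v j • Pi.single j 1) :=
        Finset.le_sum_of_subadditive p (map_zero p).le (map_add_le_add p) _ _
    _ = ∑ j, |v j| * p (Pi.single j 1) := by simp only [map_smul_eq_mul, Real.norm_eq_abs]

theorem le_cubeDiam {x y : Fin n → ℝ} (hx : ∀ j, |x j| < δ / 2)
    (hy : ∀ j, |y j| < δ / 2) : p (x - y) ≤ cubeDiam n δ p := by
  have hcube : ∀ v : Fin n → ℝ, (∀ j, |v j| < δ / 2) →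
      ∀ j, -(δ / 2) ≤ v j ∧ v j < δ / 2 :=
    fun v hv j => ⟨(abs_lt.1 (hv j)).1.le, (abs_lt.1 (hv j)).2⟩
  refine le_csSup ⟨∑ j, δ * p (Pi.single j 1), ?_⟩ ⟨x, y, hcube x hx, hcube y hy, rfl⟩
  rintro _ ⟨u, v, hu, hv, rfl⟩
  refine (p.le_sum_abs_mul _).trans (Finset.sum_le_sum fun j _ => ?_)
  have : |(u - v) j| ≤ δ := by
    simp only [Pi.sub_apply, abs_le]
    constructor <;> linarith [hu j, hv j]
  exact mul_le_mul_of_nonneg_right this (apply_nonneg p _)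

-- The error `e` may lie on the closed side of the half-open cube, so `2 * p e` is only reached
-- as the limit of `p (t • e - -(t • e))` for `t → 1⁻`.
theorem Seminorm.roundPt_sub_le (hδ : 0 < δ) (x : Fin n → ℝ) :
    p (roundPt n δ x - x) ≤ cubeDiam n δ p / 2 := by
  set e := roundPt n δ x - x
  have hlim : Tendsto (fun t : ℝ => t * (2 * p e)) (𝓝[<] 1) (𝓝 (2 * p e)) := by
    simpa using ((continuous_mul_const (2 * p e)).tendsto 1).mono_left nhdsWithin_le_nhds
  suffices 2 * p e ≤ cubeDiam n δ p by linarith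
  refine le_of_tendsto hlim ?_
  filter_upwards [Ioo_mem_nhdsLT (zero_lt_one' ℝ)] with t ⟨ht₀, ht₁⟩
  have hsmall : ∀ j, |(t • e) j| < δ / 2 := fun j => by
    rw [Pi.smul_apply, smul_eq_mul, abs_mul, abs_of_pos ht₀]
    nlinarith [abs_roundPt_sub_le hδ x j]
  have h := le_cubeDiam p (y := -(t • e)) hsmall fun j => by
    rw [Pi.neg_apply, abs_neg]; exact hsmall j
  rwa [sub_neg_eq_add, ← two_smul ℝ, smul_smul, map_smul_eq_mul, Real.norm_eq_abs,
    abs_of_pos (by positivity), mul_assoc, mul_left_comm] at h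

end Grid

theorem stmt_16_general (n : ℕ) (δ : ℝ) (hδ : 0 < δ)
    (nrm : (Fin n → ℝ) → ℝ)
    (hnrm_smul : ∀ (a : ℝ) (x : Fin n → ℝ), nrm (a • x) = |a| * nrm x)
    (hnrm_add : ∀ x y : Fin n → ℝ, nrm (x + y) ≤ nrm x + nrm y)
    (N : ℕ)
    (w : Fin N → (Fin n → ℝ) → (Fin n → ℝ))
    (lam : Fin N → ℝ) (hlam : ∀ i, lam i ∈ Set.Ico (0 : ℝ) 1)
    (hcontr : ∀ i, ∀ x y : Fin n → ℝ, nrm (w i x - w i y) ≤ lam i * nrm (x - y))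
    (xf : Fin N → (Fin n → ℝ)) (hxf : ∀ i, w i (xf i) = xf i)
    (o : Fin n → ℝ)
    (rmax : ℝ) (hrmax_ub : ∀ i, nrm (xf i - o) ≤ rmax)
    (lmax : ℝ) (hlmax_ub : ∀ i, lam i ≤ lmax) (hlmax_mem : ∃ i, lam i = lmax)
    (θ : ℝ) (hθ : θ = cubeDiam n δ nrm / 2)
    (r : ℝ) (hr : r = (1 + lmax) / (1 - lmax) * rmax + θ * (1 - lmax)⁻¹) :
    ∀ ε > 0,
      (∀ i, ∀ x ∈ {y ∈ Dgrid n δ | nrm (y - o) < r + ε},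
        roundMap n δ (w i) x ∈ {y ∈ Dgrid n δ | nrm (y - o) < r + ε}) ∧
      (∀ i, minAbsorbing (roundMap n δ (w i)) (Dgrid n δ) ⊆
        {y ∈ Dgrid n δ | nrm (y - o) < r + ε}) := by
  intro ε hε
  let p : Seminorm ℝ (Fin n → ℝ) :=
    Seminorm.of nrm hnrm_add fun a x => by rw [hnrm_smul, Real.norm_eq_abs]
  obtain ⟨i₀, hi₀⟩ := hlmax_mem
  have hl₀ : 0 ≤ lmax := hi₀ ▸ (hlam i₀).1
  have hl₁ : lmax < 1 := hi₀ ▸ (hlam i₀).2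
  have hr' : (1 - lmax) * r = θ + (1 + lmax) * rmax := by
    rw [hr]; field_simp [(sub_pos.2 hl₁).ne']; ring
  have hstep : ∀ i x, nrm (roundMap n δ (w i) x - o) - r ≤ lmax * (nrm (x - o) - r) := by
    intro i x
    have hround : nrm (roundMap n δ (w i) x - w i x) ≤ θ := by
      rw [hθ]; exact p.roundPt_sub_le hδ (w i x)
    have hfix := p.sub_le_of_contracting (hlam i).1 (hcontr i) (hxf i) x o
    have htri := le_map_sub_add_map_sub p (roundMap n δ (w i) x) (w i x) o
    have hlam_le : lam i * nrm (x - o) ≤ lmax * nrm (x - o) :=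
      mul_le_mul_of_nonneg_right (hlmax_ub i) (apply_nonneg p _)
    have hxf_le : (1 + lam i) * nrm (xf i - o) ≤ (1 + lmax) * rmax :=
      mul_le_mul (by linarith [hlmax_ub i]) (hrmax_ub i) (apply_nonneg p _) (by linarith)
    change nrm _ ≤ nrm _ + nrm _ at htri
    change nrm _ ≤ _ * nrm _ + _ * nrm _ at hfix
    linarith
  have hmaps := fun i => mapsTo_roundMap_Dgrid (δ := δ) (w i)
  exact ⟨fun i => mapsTo_sublevel_of_contracting (hmaps i) hl₀ hl₁.le (hstep i) hε,
    fun i => minAbsorbing_subset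
      (isAbsorbing_sublevel_of_contracting (hmaps i) hl₀ hl₁ (hstep i) hε)⟩

/-- for contractions `w₁, …, w_N` with fixed points `x_f⁽ⁱ⁾`, factors
`λᵢ ∈ [0,1)`, any `o ∈ ℝⁿ`, `r_max = maxᵢ d(x_f⁽ⁱ⁾, o)`, `λ_max = maxᵢ λᵢ`,
`α = (1+λ_max)/(1-λ_max)` and `r = α r_max + θ(1-λ_max)⁻¹`: for every `ε > 0` the
set `S = B(o, r+ε) ∩ D^n(δ)` satisfies `w̃ᵢ(S) ⊆ S` for every `i`, and moreover the
minimal absorbing set `M[w̃ᵢ]` is contained in `S` for every `i`. -/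
theorem stmt_16 (n : ℕ) (hn : 1 ≤ n) (δ : ℝ) (hδ : 0 < δ)
    (nrm : (Fin n → ℝ) → ℝ)
    (hnrm_eq : ∀ x, nrm x = 0 ↔ x = 0)
    (hnrm_smul : ∀ (a : ℝ) (x : Fin n → ℝ), nrm (a • x) = |a| * nrm x)
    (hnrm_add : ∀ x y : Fin n → ℝ, nrm (x + y) ≤ nrm x + nrm y)
    (N : ℕ) (hN : 0 < N)
    (w : Fin N → (Fin n → ℝ) → (Fin n → ℝ))
    (lam : Fin N → ℝ) (hlam : ∀ i, lam i ∈ Set.Ico (0 : ℝ) 1)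
    (hcontr : ∀ i, ∀ x y : Fin n → ℝ, nrm (w i x - w i y) ≤ lam i * nrm (x - y))
    (xf : Fin N → (Fin n → ℝ)) (hxf : ∀ i, w i (xf i) = xf i)
    (o : Fin n → ℝ)
    (rmax : ℝ) (hrmax_ub : ∀ i, nrm (xf i - o) ≤ rmax)
    (hrmax_mem : ∃ i, nrm (xf i - o) = rmax)
    (lmax : ℝ) (hlmax_ub : ∀ i, lam i ≤ lmax) (hlmax_mem : ∃ i, lam i = lmax)
    (θ : ℝ) (hθ : θ = cubeDiam n δ nrm / 2)
    (r : ℝ) (hr : r = (1 + lmax) / (1 - lmax) * rmax + θ * (1 - lmax)⁻¹) :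
    ∀ ε > 0,
      (∀ i, ∀ x ∈ {y ∈ Dgrid n δ | nrm (y - o) < r + ε},
        roundMap n δ (w i) x ∈ {y ∈ Dgrid n δ | nrm (y - o) < r + ε}) ∧
      (∀ i, minAbsorbing (roundMap n δ (w i)) (Dgrid n δ) ⊆
        {y ∈ Dgrid n δ | nrm (y - o) < r + ε}) :=
  stmt_16_general n δ hδ nrm hnrm_smul hnrm_add N w lam hlam hcontr xf hxf o rmax hrmax_ub lmax
    hlmax_ub hlmax_mem θ hθ r hr
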